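/- B_k(m) is a polynomial in m of degree K with leading coefficient |SP_k|/K!, where |SP_k| = Π_{i=1}^{n-1}(k_1+...+k_i+1) is the number of Stirling permutations of type k and K = k_1+...+k_n; moreover B_k(0) = B_k(-1) = ... = B_k(-K+n) = 0. -/

import Mathlib

/-!
Each summand of `B_k(m)` is `A_{k,i} / K!` times the monic polynomial `∏_{j<K} (m - i + 1 + j)`
of degree `K`, so `B_k` is a polynomial of degree `K` with leading coefficient
`∑_i A_{k,i} / K!`; for `m = -j` with `j ≤ K - n` and `1 ≤ i ≤ n`, its factor of index
`i + j - 1 < K` vanishes. Every Stirling permutation of type `k` has between `1` and `n`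
descents, because the letters at descents and the last letter are pairwise distinct; hence
`∑_i A_{k,i} = |SP_k|`. Finally `|SP_k|` is counted by induction on `n`: the copies of the largest
letter of a Stirling permutation form one contiguous block, and deleting that block is a bijection
onto the pairs made of a Stirling permutation of the smaller type and one of its
`k_1 + ⋯ + k_{n-1} + 1` gaps.
-/

open Finset

/-- The multiset {1^{k 0}, 2^{k 1}, ..., n^{k (n-1)}}. -/
def multisetOf (k : ℕ → ℕ) (n : ℕ) : Multiset ℕ :=
  ∑ i ∈ Finset.range n, Multiset.replicate (k i) (i + 1)

/-- A word is a Stirling permutation: between two equal letters, all letters are ≥. -/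
def IsStirlingPerm (w : List ℕ) : Prop :=
  ∀ i s j : ℕ, i < s → s < j → j < w.length →
    w.getD i 0 = w.getD j 0 → w.getD i 0 ≤ w.getD s 0

/-- Number of descents of a word: indices i (0-based, i < K-1) with w i > w (i+1),
together with the last index. -/
def descents (w : List ℕ) : ℕ :=
  ((Finset.range (w.length - 1)).filter fun i => w.getD (i + 1) 0 < w.getD i 0).card + 1

/-- Eulerian numbers A_{k,i}: number of Stirling permutations of {1^{k_1},...,n^{k_n}}
with exactly i descents. -/
noncomputable def eulerianA (k : ℕ → ℕ) (n i : ℕ) : ℕ :=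
  Nat.card {w : List ℕ //
    (↑w : Multiset ℕ) = multisetOf k n ∧ IsStirlingPerm w ∧ descents w = i}

/-- K = k_1 + ... + k_n. -/
def bigK (k : ℕ → ℕ) (n : ℕ) : ℕ := ∑ i ∈ Finset.range n, k i

/-- B_k(m): the coefficient of x^m in (∑_{i=1}^n A_{k,i} x^i)/(1-x)^{K+1}. -/
noncomputable def Bpoly (k : ℕ → ℕ) (n m : ℕ) : ℕ :=
  ∑ i ∈ Finset.Icc 1 n, eulerianA k n i * Nat.choose (bigK k n + m - i) (bigK k n)

/-- b_k(m): the coefficient of x^m in (∑_{i=K-n+1}^{K} A_{k,K+1-i} x^i)/(1-x)^{K+1}. -/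
noncomputable def bpoly (k : ℕ → ℕ) (n m : ℕ) : ℕ :=
  ∑ i ∈ Finset.Icc (bigK k n - n + 1) (bigK k n),
    eulerianA k n (bigK k n + 1 - i) * Nat.choose (bigK k n + m - i) (bigK k n)

/-- The polynomial extension of B_k to integer arguments, over ℚ:
B_k(m) = ∑_{i=1}^n A_{k,i} · C(K+m-i, K), where C(x, K) = x(x-1)⋯(x-K+1)/K!. -/
noncomputable def BpolyQ (k : ℕ → ℕ) (n : ℕ) (m : ℤ) : ℚ :=
  ∑ i ∈ Finset.Icc 1 n,
    (eulerianA k n i : ℚ) *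
      ((∏ j ∈ Finset.range (bigK k n), ((m : ℚ) - i + 1 + j)) / (Nat.factorial (bigK k n)))

open scoped List

namespace List

variable {α : Type*}

theorem Sublist.of_cons_sublist_append_of_notMem {x : α} {l l₁ l₂ : List α} (hx : x ∉ l₁)
    (h : x :: l <+ l₁ ++ l₂) : x :: l <+ l₂ := by
  induction l₁ with
  | nil => simpa using h
  | cons z l₁ ih =>
    rcases sublist_cons_iff.1 h with h | ⟨r, hr, -⟩
    · exact ih (fun h' => hx (mem_cons_of_mem _ h')) h
    · exact absurd ((cons.inj hr).1 ▸ mem_cons_self) hx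

variable [DecidableEq α] {m : ℕ} {c : α}

theorem filter_ne_append_replicate_append {a b : List α} (hc : c ∉ a ++ b) :
    (a ++ replicate m c ++ b).filter (· ≠ c) = a ++ b := by
  rw [filter_append, filter_append, filter_replicate_of_neg (by simp), append_nil,
    ← filter_append, filter_eq_self]
  intro x hx
  simpa using fun (h : x = c) => hc (h ▸ hx)

theorem idxOf_take_append_replicate_append_drop {u : List α} {p : ℕ} (hc : c ∉ u)
    (hm : m ≠ 0) (hp : p ≤ u.length) : (u.take p ++ replicate m c ++ u.drop p).idxOf c = p := by
  obtain ⟨m, rfl⟩ := Nat.exists_eq_succ_of_ne_zero hm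
  rw [append_assoc, idxOf_append_of_notMem fun h => hc (mem_of_mem_take h), replicate_succ,
    cons_append, idxOf_cons_self, length_take, min_eq_left hp, add_zero]

end List

theorem Multiset.coe_append_replicate_append {α : Type*} (a b : List α) (m : ℕ) (c : α) :
    ((a ++ List.replicate m c ++ b : List α) : Multiset α) =
      (a ++ b : List α) + replicate m c := by
  simp only [← Multiset.coe_add, ← Multiset.coe_replicate]
  exact add_right_comm _ _ _

theorem isStirlingPerm_iff_sublist {w : List ℕ} :
    IsStirlingPerm w ↔ ∀ x y, [x, y, x] <+ w → x ≤ y := by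
  constructor
  · intro hw x y h
    obtain ⟨f, hf⟩ := List.sublist_iff_exists_fin_orderEmbedding_get_eq.1 h
    have hx : x = w[(f 0 : ℕ)] := hf 0
    have hy : y = w[(f 1 : ℕ)] := hf 1
    have hx' : x = w[(f 2 : ℕ)] := hf 2
    have := hw (f 0) (f 1) (f 2) (f.strictMono (show (0 : Fin 3) < 1 by decide))
      (f.strictMono (show (1 : Fin 3) < 2 by decide)) (f 2).isLt
    simp only [List.getD_eq_getElem _ _ (Fin.isLt _)] at this
    rw [← hx, ← hy, ← hx'] at this
    exact this rfl
  · intro h i s j his hsj hj heq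
    have hsub := List.map_getElem_sublist (l := w)
      (is := [⟨i, by omega⟩, ⟨s, by omega⟩, ⟨j, hj⟩]) (by simp [Fin.mk_lt_mk]; omega)
    rw [List.getD_eq_getElem _ _ (by omega), List.getD_eq_getElem _ _ hj] at heq
    rw [List.getD_eq_getElem _ _ (by omega), List.getD_eq_getElem _ _ (by omega)]
    exact h _ _ (by simpa [heq] using hsub)

theorem IsStirlingPerm.sublist {v w : List ℕ} (hw : IsStirlingPerm w) (h : v <+ w) :
    IsStirlingPerm v :=
  isStirlingPerm_iff_sublist.2 fun x y hxy => isStirlingPerm_iff_sublist.1 hw x y (hxy.trans h)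

theorem isStirlingPerm_append_replicate_append {a b : List ℕ} {m c : ℕ}
    (hab : IsStirlingPerm (a ++ b)) (hlt : ∀ x ∈ a ++ b, x < c) :
    IsStirlingPerm (a ++ List.replicate m c ++ b) := by
  have hmem : ∀ x ∈ a ++ List.replicate m c ++ b, x ≤ c := by
    intro x hx
    simp only [List.mem_append, List.mem_replicate] at hx hlt
    rcases hx with (hx | hx) | hx
    exacts [(hlt x (.inl hx)).le, hx.2.le, (hlt x (.inr hx)).le]
  rw [isStirlingPerm_iff_sublist]
  intro x y hxy
  by_cases hy : y = c
  · exact hy ▸ hmem x (hxy.subset (by simp))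
  by_cases hx : x = c
  · -- a block of `c`s cannot enclose a letter other than `c`
    subst hx
    have hca : x ∉ a := fun h => (hlt x (List.mem_append_left b h)).false
    have hcb : x ∉ b.reverse := fun h =>
      (hlt x (List.mem_append_right a (List.mem_reverse.1 h))).false
    have h₁ : [x, y, x] <+ List.replicate m x ++ b := by
      rw [List.append_assoc] at hxy
      exact hxy.of_cons_sublist_append_of_notMem hca
    have h₂ : [x, y, x] <+ List.replicate m x := by
      have : [x, y, x] <+ b.reverse ++ List.replicate m x := by
        simpa using List.reverse_sublist.2 h₁
      exact this.of_cons_sublist_append_of_notMem hcb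
    exact absurd (List.eq_of_mem_replicate (h₂.subset (by simp))) hy
  have hc : c ∉ a ++ b := fun h => (hlt c h).false
  have := hxy.filter (· ≠ c)
  rw [List.filter_ne_append_replicate_append hc] at this
  exact isStirlingPerm_iff_sublist.1 hab x y (by simpa [hx, hy] using this)

theorem IsStirlingPerm.exists_eq_append_replicate_append {w : List ℕ} {c : ℕ}
    (hw : IsStirlingPerm w) (hmax : ∀ x ∈ w, x ≤ c) :
    ∃ a m b, w = a ++ List.replicate m c ++ b ∧ c ∉ a ∧ c ∉ b := by
  induction w with
  | nil => exact ⟨[], 0, [], rfl, List.not_mem_nil, List.not_mem_nil⟩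
  | cons x w ih =>
    obtain ⟨a, m, b, rfl, ha, hb⟩ :=
      ih (hw.sublist (List.sublist_cons_self x _)) fun y hy => hmax y (List.mem_cons_of_mem x hy)
    by_cases hx : x = c
    swap
    · exact ⟨x :: a, m, b, rfl, by simp [Ne.symm hx, ha], hb⟩
    subst hx
    by_cases hcw : x ∈ a ++ List.replicate m x ++ b
    swap
    · exact ⟨[], 1, _, rfl, List.not_mem_nil, hcw⟩
    cases a with
    | nil => exact ⟨[], m + 1, b, rfl, List.not_mem_nil, hb⟩
    | cons y a =>
      have hyx : y ≠ x := fun h => ha (h ▸ List.mem_cons_self)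
      have hsub : [x, y, x] <+ x :: (y :: a ++ List.replicate m x ++ b) := by
        refine List.cons_sublist_cons.2 (List.cons_sublist_cons.2 ?_)
        simpa [List.mem_cons, Ne.symm hyx] using hcw
      have hxy := isStirlingPerm_iff_sublist.1 hw x y hsub
      exact absurd (le_antisymm (hmax y (by simp)) hxy) hyx

theorem IsStirlingPerm.descents_le_card_toFinset {w : List ℕ} (hw : IsStirlingPerm w)
    (hne : w ≠ []) : descents w ≤ w.toFinset.card := by
  have hlen : 0 < w.length := List.length_pos_iff.2 hne
  set D := (range (w.length - 1)).filter fun i => w.getD (i + 1) 0 < w.getD i 0 with hD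
  -- a letter at a descent never recurs to its right
  have hrecur : ∀ i ∈ insert (w.length - 1) D, ∀ t ∈ insert (w.length - 1) D,
      i < t → w.getD i 0 ≠ w.getD t 0 := by
    intro i hi t ht hit heq
    simp only [hD, mem_insert, mem_filter, mem_range] at hi ht
    have hdesc : w.getD (i + 1) 0 < w.getD i 0 := by omega
    rcases (Nat.succ_le_of_lt hit).eq_or_lt with rfl | hlt
    · exact hdesc.ne' heq
    · exact (hw i (i + 1) t (by omega) hlt (by omega) heq).not_gt hdesc
  have hlast : w.length - 1 ∉ D := by simp [hD]
  calc descents w = (insert (w.length - 1) D).card := by rw [card_insert_of_notMem hlast]; rfl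
    _ ≤ w.toFinset.card := by
      refine card_le_card_of_injOn (fun i => w.getD i 0) (fun i hi => ?_) fun i hi t ht heq => ?_
      · have : i < w.length := by
          simp only [hD, coe_insert, Set.mem_insert_iff, mem_coe, mem_filter, mem_range] at hi
          omega
        simp only [mem_coe, List.mem_toFinset, List.getD_eq_getElem _ _ this]
        exact List.getElem_mem this
      · rcases lt_trichotomy i t with hit | rfl | hti
        exacts [absurd heq (hrecur i hi t ht hit), rfl, absurd heq.symm (hrecur t ht i hi hti)]

section Counting

variable {k : ℕ → ℕ} {n : ℕ}

theorem mem_Icc_of_mem_multisetOf {x : ℕ} (h : x ∈ multisetOf k n) : x ∈ Icc 1 n := by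
  obtain ⟨i, hi, hx⟩ := Multiset.mem_sum.1 h
  rw [Multiset.eq_of_mem_replicate hx]
  simp only [mem_range, mem_Icc] at hi ⊢
  omega

theorem lt_succ_of_mem_coe_eq_multisetOf {w : List ℕ} (hw : (w : Multiset ℕ) = multisetOf k n)
    {x : ℕ} (hx : x ∈ w) : x < n + 1 :=
  Nat.lt_succ_of_le (mem_Icc.1 (mem_Icc_of_mem_multisetOf (hw ▸ Multiset.mem_coe.2 hx))).2

theorem length_eq_bigK_of_coe_eq_multisetOf {w : List ℕ}
    (hw : (w : Multiset ℕ) = multisetOf k n) : w.length = bigK k n := by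
  simpa [multisetOf, bigK] using congrArg Multiset.card hw

theorem multisetOf_succ (k : ℕ → ℕ) (n : ℕ) :
    multisetOf k (n + 1) = multisetOf k n + Multiset.replicate (k n) (n + 1) :=
  sum_range_succ _ _

theorem le_bigK (hk : ∀ i < n, 1 ≤ k i) : n ≤ bigK k n := by
  simpa [bigK] using sum_le_sum fun i hi => hk i (mem_range.1 hi)

theorem descents_mem_Icc {w : List ℕ} (hn : 1 ≤ n) (hw : IsStirlingPerm w)
    (hms : (w : Multiset ℕ) = multisetOf k n) : descents w ∈ Icc 1 n := by
  refine mem_Icc.2 ⟨Nat.le_add_left _ _, ?_⟩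
  rcases eq_or_ne w [] with rfl | hne
  · exact hn
  calc descents w ≤ w.toFinset.card := hw.descents_le_card_toFinset hne
    _ ≤ (Icc 1 n).card := card_le_card fun x hx =>
      mem_Icc_of_mem_multisetOf (hms ▸ Multiset.mem_coe.2 (List.mem_toFinset.1 hx))
    _ = n := by simp

variable (k n) in
open Classical in
noncomputable def stirlingPerms : Finset (List ℕ) :=
  {w ∈ (multisetOf k n).lists.toFinset | IsStirlingPerm w}

theorem mem_stirlingPerms {w : List ℕ} :
    w ∈ stirlingPerms k n ↔ (w : Multiset ℕ) = multisetOf k n ∧ IsStirlingPerm w := by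
  simp [stirlingPerms, Multiset.mem_lists_iff, eq_comm]

theorem eulerianA_eq_card_filter (i : ℕ) :
    eulerianA k n i = #{w ∈ stirlingPerms k n | descents w = i} := by
  show Set.ncard {w | _} = _
  rw [← Set.ncard_coe_finset]
  congr
  ext w
  simp [mem_stirlingPerms, and_assoc]

theorem sum_eulerianA (hn : 1 ≤ n) :
    ∑ i ∈ Icc 1 n, eulerianA k n i = #(stirlingPerms k n) := by
  rw [card_eq_sum_card_fiberwise fun w hw =>
    descents_mem_Icc hn (mem_stirlingPerms.1 hw).2 (mem_stirlingPerms.1 hw).1]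
  simp only [eulerianA_eq_card_filter]

theorem take_append_replicate_append_drop_mem_stirlingPerms_succ {u : List ℕ}
    (hu : u ∈ stirlingPerms k n) (p : ℕ) :
    u.take p ++ List.replicate (k n) (n + 1) ++ u.drop p ∈ stirlingPerms k (n + 1) := by
  obtain ⟨hms, hsp⟩ := mem_stirlingPerms.1 hu
  refine mem_stirlingPerms.2 ⟨?_, isStirlingPerm_append_replicate_append (by simpa using hsp)
    (by simpa using fun x => lt_succ_of_mem_coe_eq_multisetOf hms)⟩
  rw [Multiset.coe_append_replicate_append, List.take_append_drop, hms, multisetOf_succ]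

theorem exists_take_append_replicate_append_drop_eq {w : List ℕ}
    (hw : w ∈ stirlingPerms k (n + 1)) : ∃ u ∈ stirlingPerms k n, ∃ p ≤ bigK k n,
      u.take p ++ List.replicate (k n) (n + 1) ++ u.drop p = w := by
  obtain ⟨hms, hsp⟩ := mem_stirlingPerms.1 hw
  obtain ⟨a, m, b, rfl, ha, hb⟩ := hsp.exists_eq_append_replicate_append (c := n + 1)
    fun x hx => (mem_Icc.1 (mem_Icc_of_mem_multisetOf (hms ▸ Multiset.mem_coe.2 hx))).2
  rw [Multiset.coe_append_replicate_append, multisetOf_succ] at hms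
  have hc : n + 1 ∉ multisetOf k n := fun h => by simpa using mem_Icc_of_mem_multisetOf h
  obtain rfl : m = k n := by
    simpa [ha, hb, Multiset.count_eq_zero.2 hc] using congrArg (Multiset.count (n + 1)) hms
  have hab := add_right_cancel hms
  refine ⟨a ++ b, mem_stirlingPerms.2 ⟨hab, hsp.sublist ?_⟩, a.length, ?_, by simp⟩
  · exact (List.sublist_append_left a _).append (List.Sublist.refl b)
  · have := length_eq_bigK_of_coe_eq_multisetOf hab
    rw [List.length_append] at this
    omega

theorem card_stirlingPerms_succ (hk : k n ≠ 0) :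
    #(stirlingPerms k (n + 1)) = #(stirlingPerms k n) * (bigK k n + 1) := by
  rw [← card_range (bigK k n + 1), ← card_product]
  refine (card_nbij (fun up => up.1.take up.2 ++ List.replicate (k n) (n + 1) ++ up.1.drop up.2)
    (fun up h => take_append_replicate_append_drop_mem_stirlingPerms_succ (mem_product.1 h).1 _)
    ?_ fun w hw => ?_).symm
  · rintro ⟨u, p⟩ h ⟨u', p'⟩ h' heq
    simp only [coe_product, Set.mem_prod, mem_coe, mem_stirlingPerms, mem_range] at h h' heq
    have hc : n + 1 ∉ u := fun hc => (lt_succ_of_mem_coe_eq_multisetOf h.1.1 hc).false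
    have hc' : n + 1 ∉ u' := fun hc => (lt_succ_of_mem_coe_eq_multisetOf h'.1.1 hc).false
    -- deleting the letters `n + 1` recovers the word, the first of them marks the position
    obtain rfl : u = u' := by
      have := congrArg (List.filter (· ≠ n + 1)) heq
      rwa [List.filter_ne_append_replicate_append (by rwa [List.take_append_drop]),
        List.filter_ne_append_replicate_append (by rwa [List.take_append_drop]),
        List.take_append_drop, List.take_append_drop] at this
    have hlen := length_eq_bigK_of_coe_eq_multisetOf h.1.1
    have := congrArg (List.idxOf (n + 1)) heq
    rw [List.idxOf_take_append_replicate_append_drop hc hk (by omega),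
      List.idxOf_take_append_replicate_append_drop hc hk (by omega)] at this
    rw [this]
  · obtain ⟨u, hu, p, hp, rfl⟩ := exists_take_append_replicate_append_drop_eq hw
    exact ⟨(u, p), mem_product.2 ⟨hu, mem_range.2 (Nat.lt_succ_of_le hp)⟩, rfl⟩

theorem card_stirlingPerms (hk : ∀ i < n, 1 ≤ k i) :
    #(stirlingPerms k n) = ∏ i ∈ range n, (bigK k i + 1) := by
  induction n with
  | zero =>
    refine card_eq_one.2 ⟨[], eq_singleton_iff_unique_mem.2 ⟨?_, fun w hw => ?_⟩⟩
    · exact mem_stirlingPerms.2 ⟨rfl, fun _ _ _ _ _ hj => absurd hj (Nat.not_lt_zero _)⟩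
    · simpa [multisetOf] using (mem_stirlingPerms.1 hw).1
  | succ n ih =>
    rw [card_stirlingPerms_succ (Nat.one_le_iff_ne_zero.1 (hk n n.lt_succ_self)),
      ih fun i hi => hk i (Nat.lt_succ_of_lt hi), prod_range_succ]

end Counting

open Polynomial in
theorem Polynomial.exists_eval_eq_sum_mul_prod_range {R ι : Type*} [CommRing R] [Nontrivial R]
    (s : Finset ι) (a b : ι → R) (d : ℕ) (ha : ∑ i ∈ s, a i ≠ 0) :
    ∃ p : R[X], (∀ x, p.eval x = ∑ i ∈ s, a i * ∏ j ∈ range d, (x + b i + j)) ∧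
      p.degree = d ∧ p.leadingCoeff = ∑ i ∈ s, a i := by
  set q : ι → R[X] := fun i => ∏ j ∈ range d, (X + C (b i + j))
  have hmonic : ∀ i, (q i).Monic := fun i => monic_prod_of_monic _ _ fun j _ => monic_X_add_C _
  have hdeg : ∀ i, (q i).natDegree = d := fun i => by
    simp only [q, natDegree_prod_of_monic _ _ fun j _ => monic_X_add_C _, natDegree_X_add_C,
      sum_const, card_range, smul_eq_mul, mul_one]
  set p := ∑ i ∈ s, C (a i) * q i
  have hcoeff : p.coeff d = ∑ i ∈ s, a i := by
    simp only [p, finsetSum_coeff, coeff_C_mul]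
    refine sum_congr rfl fun i _ => ?_
    rw [← hdeg i, (hmonic i).coeff_natDegree, mul_one]
  have hle : p.natDegree ≤ d :=
    natDegree_sum_le_of_forall_le _ _ fun i _ => (natDegree_C_mul_le _ _).trans (hdeg i).le
  have hpdeg : p.degree = d :=
    degree_eq_of_le_of_coeff_ne_zero (degree_le_of_natDegree_le hle) (hcoeff ▸ ha)
  refine ⟨p, fun x => ?_, hpdeg, ?_⟩
  · simp [p, q, eval_finsetSum, eval_prod, add_assoc]
  · rw [leadingCoeff, natDegree_eq_of_degree_eq_some hpdeg, hcoeff]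

/-- B_k(m) is a polynomial in m of degree K with leading coefficient |SP_k|/K!
(where |SP_k| = ∏_{i=1}^{n-1}(k_1+...+k_i+1)), and
B_k(0) = B_k(-1) = ... = B_k(-K+n) = 0. -/
theorem Bpoly_degree_leading_roots (k : ℕ → ℕ) (n : ℕ) (hk : ∀ i < n, 1 ≤ k i)
    (hn : 1 ≤ n) :
    (∃ p : Polynomial ℚ,
      (∀ m : ℤ, BpolyQ k n m = p.eval (m : ℚ)) ∧
      p.degree = bigK k n ∧
      p.leadingCoeff =
        (∏ i ∈ Finset.range (n - 1), ((∑ j ∈ Finset.range (i + 1), k j) + 1) : ℚ) /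
          (Nat.factorial (bigK k n))) ∧
    (∀ j : ℕ, j ≤ bigK k n - n → BpolyQ k n (-(j : ℤ)) = 0) := by
  have hcount : ∑ i ∈ Icc 1 n, (eulerianA k n i : ℚ) =
      ∏ i ∈ range (n - 1), ((∑ j ∈ range (i + 1), k j) + 1 : ℚ) := by
    obtain ⟨n, rfl⟩ := Nat.exists_eq_add_of_le' hn
    rw [← Nat.cast_sum, sum_eulerianA hn, card_stirlingPerms hk, prod_range_succ']
    simp [bigK]
  obtain ⟨p, hp, hdeg, hlead⟩ := Polynomial.exists_eval_eq_sum_mul_prod_range (Icc 1 n)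
    (fun i => (eulerianA k n i : ℚ) / (bigK k n).factorial) (fun i => 1 - i) (bigK k n)
    (by rw [← sum_div, hcount]; positivity)
  refine ⟨⟨p, fun m => ?_, hdeg, by rw [hlead, ← sum_div, hcount]⟩, fun j hj => ?_⟩
  · rw [hp, BpolyQ]
    refine sum_congr rfl fun i _ => ?_
    rw [div_mul_eq_mul_div, mul_div_assoc]
    congr 2
    exact prod_congr rfl fun j _ => by ring
  · have hnK := le_bigK hk
    refine sum_eq_zero fun i hi => ?_
    have hi := mem_Icc.1 hi
    rw [prod_eq_zero (i := i + j - 1) (mem_range.2 (by omega)), zero_div, mul_zero]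
    push_cast [Nat.cast_sub (show 1 ≤ i + j by omega)]
    ring
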